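/- arXiv:1611.03991 — 3 statements merged into one kernel-verified Lean document; each statement's English description precedes it below -/
import Mathlib

section
/- If a tournament T has two distinct minimal τ-retentive sets R1 and R2, then R1 and R2 are disjoint. -/
variable {V : Type}

/-- Inneighbors of `v` inside the subtournament on `s` (excluding `v` itself). -/
def inn [DecidableEq V] (r : V → V → Prop) [DecidableRel r] (s : Finset V) (v : V) :
    Finset V :=
  (s.filter fun u => r u v).erase v

lemma inn_card_lt [DecidableEq V] (r : V → V → Prop) [DecidableRel r]
    (s : Finset V) (v : V) (hv : v ∈ s) : (inn r s v).card < s.card := by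
  have h1 : inn r s v ⊆ s.erase v := by
    intro x hx
    rcases Finset.mem_erase.mp hx with ⟨hxv, hx2⟩
    exact Finset.mem_erase.mpr ⟨hxv, (Finset.mem_filter.mp hx2).1⟩
  calc (inn r s v).card ≤ (s.erase v).card := Finset.card_le_card h1
    _ < s.card := Finset.card_erase_lt_of_mem hv

/-- The tournament equilibrium set of the subtournament of `r` on `s`:
the union of all minimal τ-retentive sets. -/
def tau [DecidableEq V] (r : V → V → Prop) [DecidableRel r] (s : Finset V) : Set V :=
  {x | ∃ A : Finset V, x ∈ A ∧ A ⊆ s ∧ A.Nonempty ∧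
    (∀ v, v ∈ s → v ∈ A → ((inn r s v).Nonempty → tau r (inn r s v) ⊆ ↑A)) ∧
    ∀ B : Finset V, B ⊆ s → B ⊂ A →
      ¬ (B.Nonempty ∧
        ∀ v, v ∈ s → v ∈ B → ((inn r s v).Nonempty → tau r (inn r s v) ⊆ ↑B))}
termination_by s.card
decreasing_by
  all_goals exact inn_card_lt r s v (by assumption)

/-- `A` is a τ-retentive set of the tournament on `s`. -/
def Retentive [DecidableEq V] (r : V → V → Prop) [DecidableRel r] (s A : Finset V) : Prop :=
  A ⊆ s ∧ A.Nonempty ∧ ∀ v ∈ A, (inn r s v).Nonempty → tau r (inn r s v) ⊆ ↑A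

/-- `A` is a minimal τ-retentive set of the tournament on `s`. -/
def MinRetentive [DecidableEq V] (r : V → V → Prop) [DecidableRel r] (s A : Finset V) : Prop :=
  Retentive r s A ∧ ∀ B, Retentive r s B → B ⊆ A → B = A

/-- `r` is a tournament on the vertex set `s`. -/
def IsTournament (r : V → V → Prop) (s : Finset V) : Prop :=
  (∀ v ∈ s, ¬ r v v) ∧ ∀ u ∈ s, ∀ v ∈ s, u ≠ v → (r u v ↔ ¬ r v u)

/-- `u` is the captain of `v` in the subtournament on `s`:
`u` dominates `v` and all other inneighbors of `v`. -/
def IsCaptain (r : V → V → Prop) (s : Finset V) (u v : V) : Prop :=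
  u ∈ s ∧ v ∈ s ∧ r u v ∧ ∀ w ∈ s, w ≠ u → r w v → r u w

/-- The (undirected) domination graph of the subtournament on `s`. -/
def domGraph (r : V → V → Prop) (s : Finset V) : SimpleGraph V where
  Adj u v := (IsCaptain r s u v ∨ IsCaptain r s v u) ∧ u ≠ v
  symm := by
    constructor
    intro u v h
    exact ⟨h.1.symm, h.2.symm⟩
  loopless := by
    constructor
    intro u h
    exact h.2 rfl

theorem Retentive.inter [DecidableEq V] {r : V → V → Prop} [DecidableRel r] {s A B : Finset V}
    (hA : Retentive r s A) (hB : Retentive r s B) (hAB : (A ∩ B).Nonempty) :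
    Retentive r s (A ∩ B) := by
  refine ⟨Finset.inter_subset_left.trans hA.1, hAB, fun v hv hinn => ?_⟩
  rw [Finset.mem_inter] at hv
  rw [Finset.coe_inter]
  exact Set.subset_inter (hA.2.2 v hv.1 hinn) (hB.2.2 v hv.2 hinn)

theorem stmt2_general [DecidableEq V] (r : V → V → Prop) [DecidableRel r] (s : Finset V)
    (R1 R2 : Finset V)
    (h1 : MinRetentive r s R1) (h2 : MinRetentive r s R2) (hne : R1 ≠ R2) :
    Disjoint R1 R2 := by
  by_contra hmeet
  have hret := h1.1.inter h2.1 (Finset.not_disjoint_iff_nonempty_inter.mp hmeet)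
  exact hne ((h1.2 _ hret Finset.inter_subset_left).symm.trans
    (h2.2 _ hret Finset.inter_subset_right))

theorem stmt2 [DecidableEq V] (r : V → V → Prop) [DecidableRel r] (s : Finset V)
    (hT : IsTournament r s) (R1 R2 : Finset V)
    (h1 : MinRetentive r s R1) (h2 : MinRetentive r s R2) (hne : R1 ≠ R2) :
    Disjoint R1 R2 :=
  stmt2_general r s R1 R2 h1 h2 hne
end

section
/- If u is the captain of v in a tournament T and v belongs to a minimal τ-retentive set R of T, then u also belongs to R. -/
/-
A captain `u` of `v` is an inneighbor of `v` that beats every other inneighbor of `v`, so it is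
the Condorcet winner of the subtournament induced by `N⁻(v)`. A Condorcet winner has no
inneighbors, hence `{u}` is trivially τ-retentive there and, being a singleton, minimal; so
`u ∈ τ(T[N⁻(v)])`, and τ-retentiveness of `R` at `v` puts `u` into `R`.
-/

variable {V : Type}

section

variable {r : V → V → Prop} {s : Finset V} {u v : V}

lemma IsCaptain.ne (hT : IsTournament r s) (hc : IsCaptain r s u v) : u ≠ v := by
  rintro rfl
  exact hT.1 u hc.1 hc.2.2.1

variable [DecidableEq V] [DecidableRel r]

lemma mem_tau_of_inn_eq_empty {t : Finset V} (hu : u ∈ t) (hinn : inn r t u = ∅) :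
    u ∈ tau r t := by
  rw [tau]
  refine ⟨{u}, Finset.mem_singleton_self u, Finset.singleton_subset_iff.mpr hu,
    Finset.singleton_nonempty u, ?_, ?_⟩
  · rintro w - hw hne
    rw [Finset.mem_singleton.mp hw, hinn] at hne
    exact absurd hne Finset.not_nonempty_empty
  · rintro B - hB ⟨hBne, -⟩
    exact Finset.not_nonempty_empty (Finset.eq_empty_of_ssubset_singleton hB ▸ hBne)

lemma IsCaptain.mem_inn (hT : IsTournament r s) (hc : IsCaptain r s u v) : u ∈ inn r s v :=
  Finset.mem_erase.mpr ⟨hc.ne hT, Finset.mem_filter.mpr ⟨hc.1, hc.2.2.1⟩⟩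

lemma IsCaptain.inn_inn_eq_empty (hT : IsTournament r s) (hc : IsCaptain r s u v) :
    inn r (inn r s v) u = ∅ := by
  obtain ⟨hus, -, -, hdom⟩ := hc
  refine Finset.eq_empty_of_forall_notMem fun x hx => ?_
  obtain ⟨hxu, hx⟩ := Finset.mem_erase.mp hx
  obtain ⟨hxN, hxu'⟩ := Finset.mem_filter.mp hx
  obtain ⟨hxs, hxv⟩ := Finset.mem_filter.mp (Finset.mem_of_mem_erase hxN)
  exact (hT.2 x hxs u hus hxu).mp hxu' (hdom x hxs hxu hxv)

lemma IsCaptain.mem_tau_inn (hT : IsTournament r s) (hc : IsCaptain r s u v) :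
    u ∈ tau r (inn r s v) :=
  mem_tau_of_inn_eq_empty (hc.mem_inn hT) (hc.inn_inn_eq_empty hT)

lemma Retentive.mem_of_isCaptain {A : Finset V} (hA : Retentive r s A)
    (hT : IsTournament r s) (hc : IsCaptain r s u v) (hv : v ∈ A) : u ∈ A :=
  hA.2.2 v hv ⟨u, hc.mem_inn hT⟩ (hc.mem_tau_inn hT)

end

theorem stmt4 [DecidableEq V] (r : V → V → Prop) [DecidableRel r] (s : Finset V)
    (hT : IsTournament r s) (u v : V) (hc : IsCaptain r s u v)
    (R : Finset V) (hR : MinRetentive r s R) (hvR : v ∈ R) :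
    u ∈ R :=
  hR.1.mem_of_isCaptain hT hc hvR
end

section
/- Let R be a minimal τ-retentive set of a tournament T and v, u ∈ R. Then v is the captain of u in the induced subtournament T[R] if and only if v is the captain of u in T. -/
variable {V : Type}

/-! A captain `v` of `u` inside a τ-retentive set `R` dominates `τ(N⁻(u)) ⊆ R`, and in any
tournament a vertex dominating all of `τ` is a Condorcet winner; applied to `T[N⁻(u)]` this says
that `v` beats every inneighbor of `u`. The Condorcet-winner fact goes by induction on the
tournament: take a minimal retentive set `A ⊆ τ(T)`. If `v ∈ A`, then `τ(N⁻(v)) ⊆ A` would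
contain a vertex beating `v`, so `N⁻(v) = ∅`. Otherwise `v` beats some `x ∈ A`, and by induction
`v` is a Condorcet winner of `T[N⁻(x)]`, hence `v ∈ τ(N⁻(x)) ⊆ A`, a contradiction. -/

section

variable {r : V → V → Prop} {s t : Finset V} {u v : V}

lemma IsTournament.mono (hT : IsTournament r s) (hts : t ⊆ s) : IsTournament r t :=
  ⟨fun v hv => hT.1 v (hts hv), fun u hu v hv => hT.2 u (hts hu) v (hts hv)⟩

lemma IsTournament.ne_of_rel (hT : IsTournament r s) (hv : v ∈ s) (h : r u v) : u ≠ v := by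
  rintro rfl
  exact hT.1 u hv h

lemma IsTournament.asymm (hT : IsTournament r s) (hu : u ∈ s) (hv : v ∈ s) (h : r u v) :
    ¬ r v u :=
  (hT.2 u hu v hv (hT.ne_of_rel hv h)).mp h

lemma IsCaptain.of_superset {R : Finset V} (h : IsCaptain r s v u) (hRs : R ⊆ s)
    (hv : v ∈ R) (hu : u ∈ R) : IsCaptain r R v u :=
  ⟨hv, hu, h.2.2.1, fun w hw => h.2.2.2 w (hRs hw)⟩

variable [DecidableEq V] [DecidableRel r] {A R : Finset V} {x : V}

@[simp]
lemma mem_inn : x ∈ inn r t v ↔ x ≠ v ∧ x ∈ t ∧ r x v := by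
  simp [inn]

lemma inn_subset : inn r t v ⊆ t :=
  fun _ hx => (mem_inn.mp hx).2.1

lemma inn_ssubset (hv : v ∈ t) : inn r t v ⊂ t :=
  Finset.ssubset_of_subset_of_ssubset (fun _ hx => by simp_all) (Finset.erase_ssubset hv)

lemma mem_tau : x ∈ tau r t ↔ ∃ A, x ∈ A ∧ MinRetentive r t A := by
  rw [tau]
  simp only [Set.mem_ofPred_eq, MinRetentive, Retentive]
  refine exists_congr fun A => and_congr_right fun _ => ?_
  constructor
  · rintro ⟨hAt, hA, hret, hmin⟩
    refine ⟨⟨hAt, hA, fun v hv => hret v (hAt hv) hv⟩, fun B ⟨hBt, hB, hBret⟩ hBA => ?_⟩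
    by_contra hne
    exact hmin B hBt (hBA.ssubset_of_ne hne) ⟨hB, fun v _ hv => hBret v hv⟩
  · rintro ⟨⟨hAt, hA, hret⟩, hmin⟩
    refine ⟨hAt, hA, fun v _ hv => hret v hv, fun B hBt hBA ⟨hB, hBret⟩ => hBA.ne ?_⟩
    exact hmin B ⟨hBt, hB, fun v hv => hBret v (hBt hv) hv⟩ hBA.subset

lemma tau_subset : tau r t ⊆ ↑t := fun _ hx => by
  obtain ⟨A, hxA, hA⟩ := mem_tau.mp hx
  exact hA.1.1 hxA

lemma MinRetentive.subset_tau (hA : MinRetentive r t A) : ↑A ⊆ tau r t :=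
  fun _ hx => mem_tau.mpr ⟨A, hx, hA⟩

lemma Retentive.exists_minRetentive_subset (hA : Retentive r t A) :
    ∃ M ⊆ A, MinRetentive r t M := by
  obtain ⟨M, ⟨hM, hMA⟩, hmin⟩ :=
    wellFounded_lt.has_min {B | Retentive r t B ∧ B ⊆ A} ⟨A, hA, subset_rfl⟩
  refine ⟨M, hMA, hM, fun B hB hBM => ?_⟩
  by_contra hne
  exact hmin B ⟨hB, hBM.trans hMA⟩ (hBM.lt_of_ne hne)

lemma retentive_self (ht : t.Nonempty) : Retentive r t t :=
  ⟨subset_rfl, ht, fun _ _ _ => tau_subset.trans (Finset.coe_subset.mpr inn_subset)⟩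

lemma tau_nonempty (ht : t.Nonempty) : (tau r t).Nonempty := by
  obtain ⟨M, -, hM⟩ := (retentive_self (r := r) ht).exists_minRetentive_subset
  obtain ⟨x, hx⟩ := hM.1.2.1
  exact ⟨x, hM.subset_tau hx⟩

lemma mem_tau_of_inn_eq_empty_s5 (hv : v ∈ t) (h : inn r t v = ∅) : v ∈ tau r t := by
  have hmin : MinRetentive r t {v} :=
    ⟨⟨by simpa, by simp, by simp [h]⟩,
      fun B hB hBv => (Finset.subset_singleton_iff.mp hBv).resolve_left hB.2.1.ne_empty⟩
  exact hmin.subset_tau (by simp)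

theorem inn_eq_empty_of_forall_tau_rel (hT : IsTournament r t) (hv : v ∈ t)
    (hdom : ∀ x ∈ tau r t, x ≠ v → r v x) : inn r t v = ∅ := by
  induction t using Finset.strongInduction with
  | H t ih =>
  obtain ⟨A, -, hA⟩ := (retentive_self (r := r) ⟨v, hv⟩).exists_minRetentive_subset
  have hdomA : ∀ x ∈ A, x ≠ v → r v x := fun x hx => hdom x (hA.subset_tau hx)
  by_cases hvA : v ∈ A
  · by_contra hne
    have hinn : (inn r t v).Nonempty := Finset.nonempty_iff_ne_empty.mpr hne
    obtain ⟨y, hy⟩ := tau_nonempty (r := r) hinn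
    obtain ⟨hyv, hyt, hyrv⟩ := mem_inn.mp (tau_subset hy)
    exact hT.asymm hyt hv hyrv (hdomA y (hA.1.2.2 v hvA hinn hy) hyv)
  · obtain ⟨x, hxA⟩ := hA.1.2.1
    have hxv : x ≠ v := fun h => hvA (h ▸ hxA)
    have hv' : v ∈ inn r t x := mem_inn.mpr ⟨hxv.symm, hv, hdomA x hxA hxv⟩
    have hsub : tau r (inn r t x) ⊆ ↑A := hA.1.2.2 x hxA ⟨v, hv'⟩
    have hcw := ih _ (inn_ssubset (hA.1.1 hxA)) (hT.mono inn_subset) hv'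
      fun y hy => hdomA y (hsub hy)
    exact absurd (hsub (mem_tau_of_inn_eq_empty_s5 hv' hcw)) hvA

lemma isCaptain_of_inn_inn_eq_empty (hT : IsTournament r s) (hu : u ∈ s)
    (hvu : v ∈ inn r s u) (h : inn r (inn r s u) v = ∅) : IsCaptain r s v u := by
  obtain ⟨-, hvs, hrvu⟩ := mem_inn.mp hvu
  refine ⟨hvs, hu, hrvu, fun w hws hwv hwu => ?_⟩
  by_contra hvw
  have hw : w ∈ inn r (inn r s u) v :=
    mem_inn.mpr ⟨hwv, mem_inn.mpr ⟨hT.ne_of_rel hu hwu, hws, hwu⟩, (hT.2 w hws v hvs hwv).mpr hvw⟩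
  simp [h] at hw

lemma Retentive.isCaptain_of_isCaptain (hT : IsTournament r s) (hR : Retentive r s R)
    (h : IsCaptain r R v u) : IsCaptain r s v u := by
  obtain ⟨hvR, huR, hrvu, hcap⟩ := h
  have hv : v ∈ inn r s u := mem_inn.mpr ⟨hT.ne_of_rel (hR.1 huR) hrvu, hR.1 hvR, hrvu⟩
  have htau : tau r (inn r s u) ⊆ ↑R := hR.2.2 u huR ⟨v, hv⟩
  refine isCaptain_of_inn_inn_eq_empty hT (hR.1 huR) hv ?_
  exact inn_eq_empty_of_forall_tau_rel (hT.mono inn_subset) hv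
    fun x hx hxv => hcap x (htau hx) hxv (mem_inn.mp (tau_subset hx)).2.2

end

theorem stmt5 [DecidableEq V] (r : V → V → Prop) [DecidableRel r] (s : Finset V)
    (hT : IsTournament r s) (R : Finset V) (hR : MinRetentive r s R)
    (v u : V) (hv : v ∈ R) (hu : u ∈ R) :
    IsCaptain r R v u ↔ IsCaptain r s v u :=
  ⟨hR.1.isCaptain_of_isCaptain hT, fun h => h.of_superset hR.1.1 hv hu⟩
end
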